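/- arXiv:1610.07829 — 4 statements merged into one kernel-verified Lean document; each statement's English description precedes it below -/
import Mathlib

section
/- There exists a constant C > 0 such that for every real number a with 0 < a ≤ π/2 and every η ∈ [0,1], one has sin²((1−η)·a) ≤ (1 − 2η + η·a² + C·η²)·sin²(a). -/
lemma aux_tan {x : ℝ} (hx : 0 ≤ x) (hx' : x ≤ Real.pi / 2) :
    x * Real.cos x ≤ Real.sin x := by
  rcases eq_or_lt_of_le hx with h0 | h0
  · simp [← h0]
  rcases eq_or_lt_of_le hx' with h2 | h2
  · rw [h2]; simp
  have hc : 0 < Real.cos x := Real.cos_pos_of_mem_Ioo ⟨by linarith [Real.pi_pos], h2⟩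
  have := Real.lt_tan h0 h2
  rw [Real.tan_eq_sin_div_cos] at this
  have := (lt_div_iff₀ hc).mp this
  linarith

lemma aux_sin_sub {x : ℝ} (hx : 0 ≤ x) (hx' : x ≤ Real.pi / 2) :
    Real.sin x - x * Real.cos x ≤ x ^ 2 / 2 * Real.sin x := by
  have hs : Real.sin x ≤ x := Real.sin_le hx
  have hs0 : 0 ≤ Real.sin x := Real.sin_nonneg_of_nonneg_of_le_pi hx (by linarith [Real.pi_pos])
  have hc0 : 0 ≤ Real.cos x := Real.cos_nonneg_of_mem_Icc ⟨by linarith [Real.pi_pos], hx'⟩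
  have hc : 1 - x ^ 2 / 2 ≤ Real.cos x := Real.one_sub_sq_div_two_le_cos
  by_cases h : 1 - x ^ 2 / 2 ≥ 0
  · nlinarith
  · nlinarith

lemma aux_sin_cos {x : ℝ} (hx : 0 ≤ x) (hx' : x ≤ Real.pi / 2) :
    x - x ^ 3 ≤ Real.sin x * Real.cos x := by
  have ht := aux_tan hx hx'
  have hc0 : 0 ≤ Real.cos x := Real.cos_nonneg_of_mem_Icc ⟨by linarith [Real.pi_pos], hx'⟩
  have hc : 1 - x ^ 2 / 2 ≤ Real.cos x := Real.one_sub_sq_div_two_le_cos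
  have hsq : 1 - x ^ 2 ≤ Real.cos x ^ 2 := by
    by_cases h : 1 - x ^ 2 / 2 ≥ 0
    · nlinarith
    · nlinarith
  nlinarith [sq_nonneg x, mul_le_mul_of_nonneg_left ht hc0]

set_option maxHeartbeats 1000000 in
/-- Elementary trigonometric estimate:
`sin²((1−η)a) ≤ (1 − 2η + η·a² + C·η²)·sin²(a)` for `0 < a ≤ π/2`, `η ∈ [0,1]`. -/
theorem statement2 :
    ∃ C : ℝ, 0 < C ∧
      ∀ a η : ℝ, 0 < a → a ≤ Real.pi / 2 → η ∈ Set.Icc (0:ℝ) 1 →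
        Real.sin ((1 - η) * a) ^ 2 ≤
          (1 - 2 * η + η * a ^ 2 + C * η ^ 2) * Real.sin a ^ 2 := by
  refine ⟨Real.pi ^ 2 / 4 + Real.pi ^ 3 / 4, by positivity, ?_⟩
  intro a η ha haπ hη
  obtain ⟨hη0, hη1⟩ := hη
  set t := η * a with htdef
  have hpi := Real.pi_pos
  have ht0 : 0 ≤ t := by positivity
  have hta : t ≤ a := by nlinarith
  have htπ : t ≤ Real.pi / 2 := le_trans hta haπ
  -- basic facts about a
  have hs0 : 0 < Real.sin a := Real.sin_pos_of_pos_of_lt_pi ha (by linarith)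
  have hs1 : Real.sin a ≤ 1 := Real.sin_le_one a
  have hsa : Real.sin a ≤ a := Real.sin_le ha.le
  have hc0 : 0 ≤ Real.cos a := Real.cos_nonneg_of_mem_Icc ⟨by linarith, haπ⟩
  have hc1 : Real.cos a ≤ 1 := Real.cos_le_one a
  have hals : a ≤ Real.pi / 2 * Real.sin a := by
    have h := Real.mul_le_sin ha.le haπ
    rw [div_mul_eq_mul_div, div_le_iff₀ hpi] at h
    nlinarith
  -- facts about t
  have hst0 : 0 ≤ Real.sin t := Real.sin_nonneg_of_nonneg_of_le_pi ht0 (by linarith)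
  have hst : Real.sin t ≤ t := Real.sin_le ht0
  have hct0 : 0 ≤ Real.cos t := Real.cos_nonneg_of_mem_Icc ⟨by linarith, htπ⟩
  have hct1 : Real.cos t ≤ 1 := Real.cos_le_one t
  have hkey1 : Real.sin a - a * Real.cos a ≤ a ^ 2 / 2 * Real.sin a :=
    aux_sin_sub ha.le haπ
  have hkey2 : t - t ^ 3 ≤ Real.sin t * Real.cos t := aux_sin_cos ht0 htπ
  -- rewrite
  have hrw : Real.sin ((1 - η) * a) = Real.sin a * Real.cos t - Real.cos a * Real.sin t := by
    have : (1 - η) * a = a - t := by ring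
    rw [this, Real.sin_sub]
  rw [hrw]
  -- chain of bounds
  have hsc : 0 ≤ Real.sin a * Real.cos a := mul_nonneg hs0.le hc0
  have e1 : (Real.sin a * Real.cos t - Real.cos a * Real.sin t) ^ 2 =
      Real.sin a ^ 2 * Real.cos t ^ 2 - 2 * (Real.sin a * Real.cos a) * (Real.sin t * Real.cos t)
        + Real.cos a ^ 2 * Real.sin t ^ 2 := by ring
  have hct2 : Real.cos t ^ 2 ≤ 1 := by nlinarith [hct0, hct1]
  have hca2 : Real.cos a ^ 2 ≤ 1 := by nlinarith [hc0, hc1]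
  have b1 : Real.sin a ^ 2 * Real.cos t ^ 2 ≤ Real.sin a ^ 2 := by
    nlinarith [mul_le_mul_of_nonneg_left hct2 (sq_nonneg (Real.sin a))]
  have b2 : Real.cos a ^ 2 * Real.sin t ^ 2 ≤ Real.sin t ^ 2 := by
    nlinarith [mul_le_mul_of_nonneg_right hca2 (sq_nonneg (Real.sin t))]
  have b3 : 2 * (Real.sin a * Real.cos a) * (t - t ^ 3) ≤
      2 * (Real.sin a * Real.cos a) * (Real.sin t * Real.cos t) := by
    nlinarith [mul_le_mul_of_nonneg_left hkey2 hsc]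
  have h1 : (Real.sin a * Real.cos t - Real.cos a * Real.sin t) ^ 2 ≤
      Real.sin a ^ 2 - 2 * Real.sin a * Real.cos a * t + 2 * Real.sin a * Real.cos a * t ^ 3
        + Real.sin t ^ 2 := by
    rw [e1]; nlinarith [b3]
  have h2b : t ≤ η * (Real.pi / 2 * Real.sin a) := by
    calc t = η * a := htdef
    _ ≤ η * (Real.pi / 2 * Real.sin a) := mul_le_mul_of_nonneg_left hals hη0
  have h2 : Real.sin t ^ 2 ≤ Real.pi ^ 2 / 4 * η ^ 2 * Real.sin a ^ 2 := by
    have h2a : Real.sin t ^ 2 ≤ t ^ 2 := pow_le_pow_left₀ hst0 hst 2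
    have h2c : t ^ 2 ≤ (η * (Real.pi / 2 * Real.sin a)) ^ 2 := pow_le_pow_left₀ ht0 h2b 2
    have : (η * (Real.pi / 2 * Real.sin a)) ^ 2 = Real.pi ^ 2 / 4 * η ^ 2 * Real.sin a ^ 2 := by
      ring
    linarith
  have h3 : 2 * Real.sin a * Real.cos a * t ^ 3 ≤ Real.pi ^ 3 / 4 * η ^ 2 * Real.sin a ^ 2 := by
    have hsc1 : Real.sin a * Real.cos a ≤ 1 := by nlinarith [hs0.le, hs1, hc0, hc1]
    have hb : t ^ 3 ≤ (η * (Real.pi / 2 * Real.sin a)) ^ 3 := pow_le_pow_left₀ ht0 h2b 3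
    have he : (η * (Real.pi / 2 * Real.sin a)) ^ 3 =
        Real.pi ^ 3 / 8 * (η ^ 3 * Real.sin a ^ 3) := by ring
    have hη3 : η ^ 3 ≤ η ^ 2 := by nlinarith [sq_nonneg η]
    have hs3 : Real.sin a ^ 3 ≤ Real.sin a ^ 2 := by nlinarith [sq_nonneg (Real.sin a)]
    have hmix : η ^ 3 * Real.sin a ^ 3 ≤ η ^ 2 * Real.sin a ^ 2 :=
      mul_le_mul hη3 hs3 (by positivity) (sq_nonneg η)
    have hscale : Real.pi ^ 3 / 8 * (η ^ 3 * Real.sin a ^ 3) ≤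
        Real.pi ^ 3 / 8 * (η ^ 2 * Real.sin a ^ 2) :=
      mul_le_mul_of_nonneg_left hmix (by positivity)
    have ht3 : 2 * Real.sin a * Real.cos a * t ^ 3 ≤ 2 * t ^ 3 := by
      nlinarith [mul_le_mul_of_nonneg_right hsc1 (pow_nonneg ht0 3)]
    linarith [hb, he, hscale, ht3]
  have h4 : 2 * η * Real.sin a * (Real.sin a - a * Real.cos a) ≤ η * a ^ 2 * Real.sin a ^ 2 := by
    linarith [mul_le_mul_of_nonneg_left hkey1 (mul_nonneg hη0 hs0.le)]
  have h5 : -(2 * Real.sin a * Real.cos a * t) =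
      -2 * η * Real.sin a ^ 2 + 2 * η * Real.sin a * (Real.sin a - a * Real.cos a) := by
    rw [htdef]; ring
  linarith [h1, h2, h3, h4, h5]
end

section
/- For every ε₀ > 0 there exists δ₀ > 0 such that the following holds for every CAT(1) space (Y,d): if P, Q, R, S ∈ Y satisfy max{d(P,Q), d(Q,R), d(R,S), d(P,S)} ≤ δ₀, then d(P,R)² + d(Q,S)² ≤ d(P,Q)² + d(Q,R)² + d(R,S)² + d(P,S)² + ε₀·δ₀². -/
open scoped RealInnerProductSpace

noncomputable def sphereDist (x y : EuclideanSpace ℝ (Fin 3)) : ℝ :=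
  Real.arccos ⟪x, y⟫

open Classical in
noncomputable def sphereInterp (x y : EuclideanSpace ℝ (Fin 3)) (t : ℝ) :
    EuclideanSpace ℝ (Fin 3) :=
  if Real.sin (sphereDist x y) = 0 then x
  else (Real.sin ((1 - t) * sphereDist x y) / Real.sin (sphereDist x y)) • x
     + (Real.sin (t * sphereDist x y) / Real.sin (sphereDist x y)) • y

/-- A CAT(1) structure on a complete metric space `Y`: every pair of points at
distance `< π` is joined by a constant-speed minimizing geodesic
`t ↦ interp P Q t` (the point `(1-t)P + tQ`, at distance `t·d(P,Q)` from `P`),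
and every geodesic triangle of perimeter `< 2π` satisfies the CAT(1)
comparison inequality with respect to any comparison triangle on the unit
sphere `S² ⊂ ℝ³` (with the angular metric). -/
structure CAT1Space (Y : Type*) [MetricSpace Y] [CompleteSpace Y] where
  interp : Y → Y → ℝ → Y
  interp_zero : ∀ P Q : Y, dist P Q < Real.pi → interp P Q 0 = P
  interp_one : ∀ P Q : Y, dist P Q < Real.pi → interp P Q 1 = Q
  interp_dist : ∀ P Q : Y, dist P Q < Real.pi →
    ∀ s t : ℝ, s ∈ Set.Icc (0:ℝ) 1 → t ∈ Set.Icc (0:ℝ) 1 →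
      dist (interp P Q s) (interp P Q t) = |s - t| * dist P Q
  comparison : ∀ P Q R : Y,
    dist P Q + dist Q R + dist R P < 2 * Real.pi →
    ∀ p q r : EuclideanSpace ℝ (Fin 3), ‖p‖ = 1 → ‖q‖ = 1 → ‖r‖ = 1 →
      sphereDist p q = dist P Q → sphereDist q r = dist Q R →
      sphereDist r p = dist R P →
      ∀ s t : ℝ, s ∈ Set.Icc (0:ℝ) 1 → t ∈ Set.Icc (0:ℝ) 1 →
        dist (interp P Q t) (interp R Q s) ≤
          sphereDist (sphereInterp p q t) (sphereInterp r q s)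

/-! Let `m` be the midpoint of the geodesic from `S` to `Q`. Comparing the triangles `P Q S` and
`R Q S` with spherical triangles bounds `d(P, m)` and `d(R, m)` by spherical medians. A median of a
spherical triangle with sides `a` (opposite) and `b`, `c` has cosine
`(cos b + cos c) / (2 cos (a / 2))`, and Taylor expansion turns this into the Euclidean median
formula `(b² + c²) / 2 - a² / 4` up to an error `O(δ⁴)`. With `d(P, R)² ≤ 2 d(P, m)² + 2 d(R, m)²`
this gives `d(P, R)² + d(Q, S)² ≤ d(P, Q)² + d(Q, R)² + d(R, S)² + d(P, S)² + 128 δ⁴`, and `δ₀` is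
chosen with `128 δ₀² ≤ ε₀`. -/

open Real

lemma sphereDist_comm (x y : EuclideanSpace ℝ (Fin 3)) : sphereDist x y = sphereDist y x := by
  rw [sphereDist, sphereDist, real_inner_comm]

lemma cos_sphereDist {x y : EuclideanSpace ℝ (Fin 3)} (hx : ‖x‖ = 1) (hy : ‖y‖ = 1) :
    cos (sphereDist x y) = ⟪x, y⟫ := by
  have h := abs_real_inner_le_norm x y
  rw [hx, hy, mul_one, abs_le] at h
  exact cos_arccos h.1 h.2

lemma sphereInterp_zero (x y : EuclideanSpace ℝ (Fin 3)) : sphereInterp x y 0 = x := by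
  unfold sphereInterp
  split_ifs with h
  · rfl
  · simp [div_self h]

lemma inner_sphereInterp_half (p : EuclideanSpace ℝ (Fin 3)) {s q : EuclideanSpace ℝ (Fin 3)}
    (hs : ‖s‖ = 1) (hq : ‖q‖ = 1) (hsq : sphereDist s q < π) :
    ⟪p, sphereInterp s q (1 / 2)⟫ = (⟪p, s⟫ + ⟪p, q⟫) / (2 * cos (sphereDist s q / 2)) := by
  set a := sphereDist s q
  have ha : 0 ≤ a := arccos_nonneg _
  unfold sphereInterp
  split_ifs with h
  · have ha0 : a = 0 := (sin_eq_zero_iff_of_lt_of_lt (by linarith [pi_pos]) hsq).1 h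
    have : s = q := (inner_eq_one_iff_of_norm_eq_one hs hq).1
      (by rw [← cos_sphereDist hs hq, ← cos_zero, ← ha0])
    subst this
    simp [ha0]
  · have hsin2 : sin a = 2 * sin (a / 2) * cos (a / 2) := by
      rw [← sin_two_mul]; ring_nf
    have hcos : cos (a / 2) ≠ 0 := fun h0 ↦ h (by rw [hsin2, h0]; ring)
    have hsin : sin (a / 2) ≠ 0 := fun h0 ↦ h (by rw [hsin2, h0]; ring)
    rw [inner_add_right, real_inner_smul_right, real_inner_smul_right,
      show (1 - 1 / 2 : ℝ) * a = a / 2 by ring, show (1 / 2 : ℝ) * a = a / 2 by ring, hsin2]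
    field_simp

lemma inner_vec3 (x y z x' y' z' : ℝ) :
    ⟪!₂[x, y, z], !₂[x', y', z']⟫ = x * x' + y * y' + z * z' := by
  simp [PiLp.inner_apply, Fin.sum_univ_three]
  ring

lemma norm_vec3 {x y z : ℝ} (h : x ^ 2 + y ^ 2 + z ^ 2 = 1) : ‖!₂[x, y, z]‖ = 1 := by
  simp [EuclideanSpace.norm_eq, Fin.sum_univ_three, h]

/-- `cos a` lies between `cos (b + c)` and `cos (b - c)`, its values at the degenerate triangles
with sides `b`, `c`. -/
lemma abs_cos_sub_cos_mul_cos_le {a b c : ℝ} (hab : c ≤ a + b) (hbc : a ≤ b + c)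
    (hca : b ≤ c + a) (hper : a + b + c ≤ 2 * π) :
    |cos a - cos b * cos c| ≤ sin b * sin c := by
  have hpi := pi_pos
  have hupper : cos a ≤ cos (b - c) := by
    rw [← cos_abs (b - c)]
    exact cos_le_cos_of_nonneg_of_le_pi (abs_nonneg _) (by linarith)
      (abs_sub_le_iff.2 ⟨by linarith, by linarith⟩)
  have hlower : cos (b + c) ≤ cos a := by
    rcases le_total (b + c) π with h | h
    · exact cos_le_cos_of_nonneg_of_le_pi (by linarith) h hbc
    · rw [← cos_two_pi_sub]
      exact cos_le_cos_of_nonneg_of_le_pi (by linarith) (by linarith) (by linarith)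
  rw [cos_sub] at hupper
  rw [cos_add] at hlower
  exact abs_le.2 ⟨by linarith, by linarith⟩

lemma exists_sphere_triangle {a b c : ℝ} (hab : c ≤ a + b) (hbc : a ≤ b + c)
    (hca : b ≤ c + a) (hper : a + b + c ≤ 2 * π) :
    ∃ p q r : EuclideanSpace ℝ (Fin 3), ‖p‖ = 1 ∧ ‖q‖ = 1 ∧ ‖r‖ = 1 ∧
      sphereDist p q = c ∧ sphereDist q r = a ∧ sphereDist r p = b := by
  have hbound := abs_cos_sub_cos_mul_cos_le hab hbc hca hper
  -- `t` is the cosine of the angle at `p`, read off from the spherical law of cosines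
  set t := (cos a - cos b * cos c) / (sin b * sin c)
  have ht : |t| ≤ 1 := by
    rw [abs_div]
    exact div_le_one_of_le₀ (hbound.trans (le_abs_self _)) (abs_nonneg _)
  have ht2 : t ^ 2 ≤ 1 := (sq_le_one_iff_abs_le_one t).2 ht
  have hlaw : cos c * cos b + sin c * (sin b * t) = cos a := by
    rcases eq_or_ne (sin b * sin c) 0 with h | h
    · have : cos a - cos b * cos c = 0 := abs_nonpos_iff.1 (h ▸ hbound)
      simp only [t, h, div_zero]
      linarith
    · rw [show sin c * (sin b * t) = sin b * sin c * t by ring, mul_div_cancel₀ _ h]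
      ring
  refine ⟨!₂[1, 0, 0], !₂[cos c, sin c, 0], !₂[cos b, sin b * t, sin b * √(1 - t ^ 2)],
    norm_vec3 (by norm_num), norm_vec3 (by nlinarith [sin_sq_add_cos_sq c]), norm_vec3 ?_,
    ?_, ?_, ?_⟩
  · rw [mul_pow, mul_pow, sq_sqrt (by linarith)]
    nlinarith [sin_sq_add_cos_sq b]
  · rw [sphereDist, inner_vec3]
    simpa using arccos_cos (by linarith) (by linarith)
  · rw [sphereDist, inner_vec3, zero_mul, add_zero, hlaw]
    exact arccos_cos (by linarith) (by linarith)
  · rw [sphereDist, inner_vec3]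
    simpa using arccos_cos (by linarith) (by linarith)

lemma cos_le_one_sub_sq_div_two_add {x : ℝ} (hx : |x| ≤ 1) :
    cos x ≤ 1 - x ^ 2 / 2 + 5 / 96 * x ^ 4 := by
  have h := (abs_le.1 (cos_bound hx)).2
  rw [pow_abs, show x ^ 4 = (x ^ 2) ^ 2 by ring, abs_sq] at h
  nlinarith

lemma arccos_sq_le_of_cos_sqrt_le {x E : ℝ} (hE : 0 ≤ E) (hEπ : E ≤ π ^ 2)
    (h : cos √E ≤ x) : arccos x ^ 2 ≤ E := by
  have hsqrt : √E ≤ π := (sqrt_le_left pi_pos.le).2 hEπ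
  have : arccos x ≤ √E := by
    simpa [arccos_cos (sqrt_nonneg E) hsqrt] using antitone_arccos h
  simpa [sq_sqrt hE] using pow_le_pow_left₀ (arccos_nonneg x) this 2

-- the product of the quartic Taylor bounds for `cos (a / 2)` and `cos √E`, with `A = a²`
lemma median_polynomial_bound {A E D : ℝ} (hA : 0 ≤ A) (hAD : A ≤ D) (hE : 0 ≤ E)
    (hED : E ≤ 3 / 2 * D) (hD : D ≤ 1 / 4) :
    2 * ((1 - A / 8 + 5 / 1536 * A ^ 2) * (1 - E / 2 + 5 / 96 * E ^ 2)) ≤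
      2 - E - A / 4 + 2 * D ^ 2 := by
  nlinarith [mul_le_mul hAD hED hE (hA.trans hAD), mul_le_mul hED hED hE (by linarith),
    mul_le_mul hAD hAD hA (hA.trans hAD), mul_nonneg hA hE, mul_nonneg (mul_nonneg hA hA) hE,
    mul_nonneg (mul_nonneg hA hE) hE, mul_nonneg (mul_nonneg hA hA) (mul_nonneg hE hE)]

lemma arccos_median_sq_le {a b c δ : ℝ} (ha : 0 ≤ a) (hb : 0 ≤ b) (hc : 0 ≤ c)
    (haδ : a ≤ δ) (hbδ : b ≤ δ) (hcδ : c ≤ δ) (hδ : δ ≤ 1 / 2) (habc : a ≤ b + c) :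
    arccos ((cos b + cos c) / (2 * cos (a / 2))) ^ 2 ≤
      (b ^ 2 + c ^ 2) / 2 - a ^ 2 / 4 + 2 * δ ^ 4 := by
  set E := (b ^ 2 + c ^ 2) / 2 - a ^ 2 / 4 + 2 * δ ^ 4 with hE_def
  have ha2 : a ^ 2 ≤ δ ^ 2 := pow_le_pow_left₀ ha haδ 2
  have hb2 : b ^ 2 ≤ δ ^ 2 := pow_le_pow_left₀ hb hbδ 2
  have hc2 : c ^ 2 ≤ δ ^ 2 := pow_le_pow_left₀ hc hcδ 2
  have hδ2 : δ ^ 2 ≤ 1 / 4 := by nlinarith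
  have hE : 0 ≤ E := by
    nlinarith [pow_le_pow_left₀ ha habc 2, sq_nonneg (b - c), pow_nonneg (sq_nonneg δ) 2]
  have hED : E ≤ 3 / 2 * δ ^ 2 := by
    nlinarith [mul_le_mul_of_nonneg_left hδ2 (sq_nonneg δ), sq_nonneg a]
  have hcos_a : 0 < cos (a / 2) :=
    cos_pos_of_mem_Ioo ⟨by linarith [pi_pos], by linarith [pi_gt_three]⟩
  apply arccos_sq_le_of_cos_sqrt_le hE (by nlinarith [pi_gt_three])
  rw [le_div_iff₀ (by positivity)]
  have hcos_sqrt : cos √E ≤ 1 - E / 2 + 5 / 96 * E ^ 2 := by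
    have h := cos_le_one_sub_sq_div_two_add (x := √E)
      (by rw [abs_of_nonneg (sqrt_nonneg E)]; exact sqrt_le_one.mpr (by linarith))
    rwa [sq_sqrt hE, show √E ^ 4 = (√E ^ 2) ^ 2 by ring, sq_sqrt hE] at h
  have hcos_half : cos (a / 2) ≤ 1 - a ^ 2 / 8 + 5 / 1536 * (a ^ 2) ^ 2 := by
    have h := cos_le_one_sub_sq_div_two_add (x := a / 2)
      (by rw [abs_of_nonneg]; all_goals linarith)
    linarith [show (a / 2) ^ 4 = (a ^ 2) ^ 2 / 16 by ring]
  calc cos √E * (2 * cos (a / 2))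
      = 2 * (cos (a / 2) * cos √E) := by ring
    _ ≤ 2 * ((1 - a ^ 2 / 8 + 5 / 1536 * (a ^ 2) ^ 2) * (1 - E / 2 + 5 / 96 * E ^ 2)) := by
        gcongr
        · exact cos_nonneg_of_mem_Icc ⟨by linarith [pi_pos, sqrt_nonneg E],
            (sqrt_le_left (by linarith [pi_pos])).2 (by nlinarith [pi_gt_three])⟩
        · nlinarith
    _ ≤ 2 - E - a ^ 2 / 4 + 2 * (δ ^ 2) ^ 2 :=
        median_polynomial_bound (sq_nonneg a) ha2 hE hED hδ2
    _ ≤ cos b + cos c := by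
        linarith [one_sub_sq_div_two_le_cos (x := b), one_sub_sq_div_two_le_cos (x := c)]

namespace CAT1Space

variable {Y : Type*} [MetricSpace Y] [CompleteSpace Y]

theorem dist_midpoint_sq_le (cat : CAT1Space Y) {X Q S : Y} {δ : ℝ} (hδ : δ ≤ 1 / 2)
    (hXQ : dist X Q ≤ δ) (hSX : dist S X ≤ δ) (hQS : dist Q S ≤ δ) :
    dist X (cat.interp S Q (1 / 2)) ^ 2 ≤
      (dist S X ^ 2 + dist X Q ^ 2) / 2 - dist Q S ^ 2 / 4 + 2 * δ ^ 4 := by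
  have hpi := pi_gt_three
  have hc : dist X Q ≤ dist Q S + dist S X := by
    linarith [dist_triangle X S Q, dist_comm X S, dist_comm S Q]
  have ha : dist Q S ≤ dist S X + dist X Q := by
    linarith [dist_triangle Q X S, dist_comm Q X, dist_comm X S]
  have hb : dist S X ≤ dist X Q + dist Q S := by
    linarith [dist_triangle S Q X, dist_comm S Q, dist_comm Q X]
  obtain ⟨p, q, r, hp, hq, hr, hpq, hqr, hrp⟩ :=
    exists_sphere_triangle (a := dist Q S) (b := dist S X) (c := dist X Q)
      hc ha hb (by linarith)
  have hcomp := cat.comparison X Q S (by linarith) p q r hp hq hr hpq hqr hrp (1 / 2) 0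
    ⟨by norm_num, by norm_num⟩ ⟨le_rfl, zero_le_one⟩
  rw [cat.interp_zero X Q (by linarith), sphereInterp_zero, sphereDist,
    inner_sphereInterp_half p hr hq (by rw [sphereDist_comm, hqr]; linarith),
    real_inner_comm r p, ← cos_sphereDist hr hp, ← cos_sphereDist hp hq,
    sphereDist_comm r q, hrp, hpq, hqr] at hcomp
  calc dist X (cat.interp S Q (1 / 2)) ^ 2
      ≤ arccos ((cos (dist S X) + cos (dist X Q)) / (2 * cos (dist Q S / 2))) ^ 2 :=
        pow_le_pow_left₀ dist_nonneg hcomp 2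
    _ ≤ _ := arccos_median_sq_le dist_nonneg dist_nonneg dist_nonneg hQS hSX hXQ hδ ha

theorem dist_sq_add_dist_sq_le (cat : CAT1Space Y) {P Q R S : Y} {δ : ℝ} (hδ : δ ≤ 1 / 4)
    (hPQ : dist P Q ≤ δ) (hQR : dist Q R ≤ δ) (hRS : dist R S ≤ δ) (hPS : dist P S ≤ δ) :
    dist P R ^ 2 + dist Q S ^ 2 ≤
      dist P Q ^ 2 + dist Q R ^ 2 + dist R S ^ 2 + dist P S ^ 2 + 128 * δ ^ 4 := by
  set m := cat.interp S Q (1 / 2)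
  have hQS : dist Q S ≤ 2 * δ := by linarith [dist_triangle Q R S]
  have hδ2 : δ ≤ 2 * δ := by linarith [dist_nonneg.trans hPQ]
  have hP := cat.dist_midpoint_sq_le (X := P) (by linarith) (hPQ.trans hδ2)
    ((dist_comm S P).trans_le (hPS.trans hδ2)) hQS
  have hR := cat.dist_midpoint_sq_le (X := R) (by linarith)
    ((dist_comm R Q).trans_le (hQR.trans hδ2)) ((dist_comm S R).trans_le (hRS.trans hδ2)) hQS
  have hPR : dist P R ^ 2 ≤ 2 * dist P m ^ 2 + 2 * dist R m ^ 2 := by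
    have h := dist_triangle_right P R m
    nlinarith [dist_nonneg (x := P) (y := R), sq_nonneg (dist P m - dist R m)]
  rw [dist_comm S P] at hP
  rw [dist_comm S R, dist_comm R Q] at hR
  linarith

end CAT1Space

/-- The CAT(1) quadrilateral comparison estimate. -/
theorem statement3 :
    ∀ ε₀ : ℝ, 0 < ε₀ → ∃ δ₀ : ℝ, 0 < δ₀ ∧
      ∀ (Y : Type) [MetricSpace Y] [CompleteSpace Y] (_ : CAT1Space Y)
        (P Q R S : Y),
        max (max (dist P Q) (dist Q R)) (max (dist R S) (dist P S)) ≤ δ₀ →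
        dist P R ^ 2 + dist Q S ^ 2 ≤
          dist P Q ^ 2 + dist Q R ^ 2 + dist R S ^ 2 + dist P S ^ 2 +
            ε₀ * δ₀ ^ 2 := by
  intro ε₀ hε₀
  set δ₀ := min (1 / 4) (ε₀ / 128)
  have hδ₀ : 0 < δ₀ := lt_min (by norm_num) (by positivity)
  have hδ₀_le : δ₀ ≤ 1 / 4 := min_le_left _ _
  have herror : 128 * δ₀ ^ 4 ≤ ε₀ * δ₀ ^ 2 := by
    have : 128 * δ₀ ^ 2 ≤ ε₀ := by nlinarith [min_le_right (1 / 4) (ε₀ / 128)]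
    nlinarith [sq_nonneg δ₀]
  refine ⟨δ₀, hδ₀, fun Y _ _ cat P Q R S hmax ↦ ?_⟩
  simp only [max_le_iff] at hmax
  obtain ⟨⟨hPQ, hQR⟩, hRS, hPS⟩ := hmax
  linarith [cat.dist_sq_add_dist_sq_le hδ₀_le hPQ hQR hRS hPS]
end

section
/- Let σ : [0,1] → S² ⊂ ℝ³ be a constant-speed minimizing geodesic on the unit sphere and let P ∈ S² be a unit vector, where the angular distance is d(x,y) = arccos⟨x,y⟩. Assume d(σ(t), P) < π/2 for all t ∈ [0,1]. Then the function t ↦ d(σ(t),P)² + 2·cos(d(σ(t),P)) is convex on [0,1]. -/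
open scoped RealInnerProductSpace

/-!
Write the geodesic as `σ t = cos (L t) • u + sin (L t) • w` for an orthonormal pair `(u, w)`.
Then `cos d(σ t, P) = a cos (L t) + b sin (L t)` with `a² + b² ≤ 1` by Bessel's inequality, and
`r = arccos (a cos (L t) + b sin (L t))` has `r'' = L² cos r (1 - a² - b²) / sin³ r ≥ 0` as long as
`cos r > 0`; the boundary case `a² + b² = 1`, where `r` has a corner, is a limit of the others.
Finally `x ↦ x² + 2 cos x` is convex and nondecreasing on `[0, ∞)`, so its composite with `r` is
convex.
-/

open Real Set Filter Topology InnerProductGeometry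

section InnerProductSpace

variable {E : Type*} [NormedAddCommGroup E] [InnerProductSpace ℝ E]

theorem inner_sq_add_inner_sq_le_norm_sq {u v : E} (hu : ‖u‖ = 1) (hv : ‖v‖ = 1)
    (huv : ⟪u, v⟫ = 0) (x : E) : ⟪u, x⟫ ^ 2 + ⟪v, x⟫ ^ 2 ≤ ‖x‖ ^ 2 := by
  have h := real_inner_self_nonneg (x := x - (⟪u, x⟫ • u + ⟪v, x⟫ • v))
  simp only [inner_sub_left, inner_sub_right, inner_add_left, inner_add_right,
    real_inner_smul_left, real_inner_smul_right, inner_self_eq_one_of_norm_eq_one (𝕜 := ℝ) hu,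
    inner_self_eq_one_of_norm_eq_one (𝕜 := ℝ) hv, huv, real_inner_comm u v, real_inner_comm u x,
    real_inner_comm v x, real_inner_self_eq_norm_sq x] at h
  nlinarith

theorem eq_cos_smul_add_sin_smul {u v x : E} {θ : ℝ} (hu : ‖u‖ = 1) (hv : ‖v‖ = 1)
    (hx : ‖x‖ = 1) (huv : ⟪u, v⟫ = 0) (hxu : ⟪x, u⟫ = cos θ) (hxv : ⟪x, v⟫ = sin θ) :
    x = cos θ • u + sin θ • v := by
  have hw : ‖cos θ • u + sin θ • v‖ = 1 := by
    refine (pow_eq_one_iff_of_nonneg (norm_nonneg _) two_ne_zero).1 ?_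
    rw [← real_inner_self_eq_norm_sq]
    simp only [inner_add_left, inner_add_right, real_inner_smul_left, real_inner_smul_right,
      inner_self_eq_one_of_norm_eq_one (𝕜 := ℝ) hu, inner_self_eq_one_of_norm_eq_one (𝕜 := ℝ) hv,
      huv, real_inner_comm u v]
    linear_combination sin_sq_add_cos_sq θ
  refine (inner_eq_one_iff_of_norm_eq_one (𝕜 := ℝ) hx hw).1 ?_
  simp only [inner_add_right, real_inner_smul_right, hxu, hxv]
  linear_combination sin_sq_add_cos_sq θ

theorem exists_orthonormal_inner_eq_sin_of_inner_eq_cos {u v : E} {L : ℝ} (hu : ‖u‖ = 1)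
    (hv : ‖v‖ = 1) (huv : ⟪u, v⟫ = cos L) (hL : sin L ≠ 0) :
    ∃ w : E, ‖w‖ = 1 ∧ ⟪u, w⟫ = 0 ∧
      ∀ (x : E) (θ : ℝ), ⟪x, u⟫ = cos θ → ⟪x, v⟫ = cos (θ - L) → ⟪x, w⟫ = sin θ := by
  refine ⟨(sin L)⁻¹ • (v - cos L • u), ?_, ?_, fun x θ hxu hxv => ?_⟩
  · refine (pow_eq_one_iff_of_nonneg (norm_nonneg _) two_ne_zero).1 ?_
    rw [← real_inner_self_eq_norm_sq]
    simp only [inner_sub_left, inner_sub_right, real_inner_smul_left, real_inner_smul_right,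
      inner_self_eq_one_of_norm_eq_one (𝕜 := ℝ) hu, inner_self_eq_one_of_norm_eq_one (𝕜 := ℝ) hv,
      huv, real_inner_comm u v]
    field_simp
    linear_combination -sin_sq_add_cos_sq L
  · simp only [inner_sub_right, real_inner_smul_right, inner_self_eq_one_of_norm_eq_one (𝕜 := ℝ) hu,
      huv]
    ring
  · simp only [inner_sub_right, real_inner_smul_right, hxu, hxv, cos_sub]
    field_simp
    ring

theorem exists_inner_eq_mul_cos_add_mul_sin {σ : ℝ → E} {L : ℝ} (hL : L < π)
    (hσ : ∀ t ∈ Icc (0 : ℝ) 1, ‖σ t‖ = 1)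
    (hgeo : ∀ s ∈ Icc (0 : ℝ) 1, ∀ t ∈ Icc (0 : ℝ) 1, angle (σ s) (σ t) = |s - t| * L) (P : E) :
    ∃ a b : ℝ, a ^ 2 + b ^ 2 ≤ ‖P‖ ^ 2 ∧
      ∀ t ∈ Icc (0 : ℝ) 1, ⟪σ t, P⟫ = a * cos (L * t) + b * sin (L * t) := by
  have h0 : (0 : ℝ) ∈ Icc (0 : ℝ) 1 := left_mem_Icc.2 zero_le_one
  have h1 : (1 : ℝ) ∈ Icc (0 : ℝ) 1 := right_mem_Icc.2 zero_le_one
  have hL0 : 0 ≤ L := by simpa [hgeo 1 h1 0 h0] using angle_nonneg (σ 1) (σ 0)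
  have hinner : ∀ s ∈ Icc (0 : ℝ) 1, ∀ t ∈ Icc (0 : ℝ) 1, ⟪σ s, σ t⟫ = cos (L * (s - t)) := by
    intro s hs t ht
    rw [← cos_abs, abs_mul, abs_of_nonneg hL0, mul_comm, ← hgeo s hs t ht, cos_angle,
      hσ s hs, hσ t ht, mul_one, div_one]
  rcases hL0.eq_or_lt with rfl | hLpos
  · refine ⟨⟪σ 0, P⟫, 0, ?_, fun t ht => ?_⟩
    · simpa [sq_le_sq, hσ 0 h0] using abs_real_inner_le_norm (σ 0) P
    · have hσt : σ t = σ 0 := (inner_eq_one_iff_of_norm_eq_one (𝕜 := ℝ) (hσ t ht) (hσ 0 h0)).1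
        (by simpa using hinner t ht 0 h0)
      simp [hσt]
  · obtain ⟨w, hw, h0w, hw_inner⟩ := exists_orthonormal_inner_eq_sin_of_inner_eq_cos (hσ 0 h0)
      (hσ 1 h1) (by simpa using hinner 0 h0 1 h1) (sin_pos_of_pos_of_lt_pi hLpos hL).ne'
    refine ⟨⟪σ 0, P⟫, ⟪w, P⟫, inner_sq_add_inner_sq_le_norm_sq (hσ 0 h0) hw h0w P, fun t ht => ?_⟩
    have hu : ⟪σ t, σ 0⟫ = cos (L * t) := by simpa using hinner t ht 0 h0
    have hv : ⟪σ t, σ 1⟫ = cos (L * t - L) := by rw [hinner t ht 1 h1, mul_sub, mul_one]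
    rw [eq_cos_smul_add_sin_smul (hσ 0 h0) hw (hσ t ht) h0w hu (hw_inner _ _ hu hv)]
    simp only [inner_add_left, real_inner_smul_left]
    ring

end InnerProductSpace

theorem sphereDist_eq_angle {x y : EuclideanSpace ℝ (Fin 3)} (hx : ‖x‖ = 1) (hy : ‖y‖ = 1) :
    sphereDist x y = angle x y := by
  simp [sphereDist, angle, hx, hy]

theorem ConvexOn.comp_of_mapsTo {s t : Set ℝ} {f g : ℝ → ℝ} (hg : ConvexOn ℝ t g)
    (hg_mono : MonotoneOn g t) (hf : ConvexOn ℝ s f) (hst : MapsTo f s t) :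
    ConvexOn ℝ s (g ∘ f) :=
  ⟨hf.1, fun _ hx _ hy _ _ ha hb hab =>
    (hg_mono (hst (hf.1 hx hy ha hb hab)) (hg.1 (hst hx) (hst hy) ha hb hab)
      (hf.2 hx hy ha hb hab)).trans (hg.2 (hst hx) (hst hy) ha hb hab)⟩

theorem ConvexOn.of_tendsto {E ι : Type*} [AddCommMonoid E] [Module ℝ E] {l : Filter ι} [l.NeBot]
    {s : Set E} {F : ι → E → ℝ} {f : E → ℝ} (hs : Convex ℝ s)
    (hF : ∀ᶠ i in l, ConvexOn ℝ s (F i)) (hlim : ∀ x ∈ s, Tendsto (fun i => F i x) l (𝓝 (f x))) :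
    ConvexOn ℝ s f :=
  ⟨hs, fun x hx y hy a b ha hb hab =>
    le_of_tendsto_of_tendsto (hlim _ (hs hx hy ha hb hab))
      (((hlim x hx).const_smul a).add ((hlim y hy).const_smul b))
      (hF.mono fun _ hi => hi.2 hx hy ha hb hab)⟩

theorem convexOn_sq_add_two_mul_cos : ConvexOn ℝ univ (fun x : ℝ => x ^ 2 + 2 * cos x) := by
  refine convexOn_of_hasDerivWithinAt2_nonneg convex_univ (by fun_prop)
    (f' := fun x => 2 * x - 2 * sin x) (f'' := fun x => 2 - 2 * cos x)
    (fun x _ => ?_) (fun x _ => ?_) (fun x _ => by linarith [cos_le_one x])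
  · exact (((hasDerivAt_pow 2 x).add ((hasDerivAt_cos x).const_mul 2)).congr_deriv
      (by push_cast; ring)).hasDerivWithinAt
  · exact ((((hasDerivAt_id x).const_mul 2).sub ((hasDerivAt_sin x).const_mul 2)).congr_deriv
      (by ring)).hasDerivWithinAt

theorem monotoneOn_sq_add_two_mul_cos : MonotoneOn (fun x : ℝ => x ^ 2 + 2 * cos x) (Ici 0) := by
  refine monotoneOn_of_hasDerivWithinAt_nonneg (convex_Ici 0) (by fun_prop)
    (f' := fun x => 2 * x - 2 * sin x) (fun x _ => ?_) (fun x hx => ?_)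
  · exact (((hasDerivAt_pow 2 x).add ((hasDerivAt_cos x).const_mul 2)).congr_deriv
      (by push_cast; ring)).hasDerivWithinAt
  · rw [interior_Ici] at hx
    linarith [sin_le hx.out.le]

theorem hasDerivAt_mul_cos_add_mul_sin (a b L t : ℝ) :
    HasDerivAt (fun t => a * cos (L * t) + b * sin (L * t))
      (L * b * cos (L * t) + -(L * a) * sin (L * t)) t := by
  have hLt : HasDerivAt (fun t => L * t) L t := by simpa using (hasDerivAt_id t).const_mul L
  refine ((((hasDerivAt_cos _).comp t hLt).const_mul a).add
    (((hasDerivAt_sin _).comp t hLt).const_mul b)).congr_deriv ?_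
  ring

theorem mul_cos_add_mul_sin_sq_le (a b θ : ℝ) :
    (a * cos θ + b * sin θ) ^ 2 ≤ a ^ 2 + b ^ 2 := by
  nlinarith [sin_sq_add_cos_sq θ, sq_nonneg (a * sin θ - b * cos θ)]

theorem convexOn_arccos_mul_cos_add_mul_sin {s : Set ℝ} (hs : Convex ℝ s) {a b L : ℝ}
    (hab : a ^ 2 + b ^ 2 < 1) (hpos : ∀ t ∈ s, 0 < a * cos (L * t) + b * sin (L * t)) :
    ConvexOn ℝ s (fun t => arccos (a * cos (L * t) + b * sin (L * t))) := by
  set c : ℝ → ℝ := fun t => a * cos (L * t) + b * sin (L * t)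
  change ConvexOn ℝ s (arccos ∘ c)
  change ∀ t ∈ s, 0 < c t at hpos
  set c' : ℝ → ℝ := fun t => L * b * cos (L * t) + -(L * a) * sin (L * t)
  have hc (t : ℝ) : HasDerivAt c (c' t) t := hasDerivAt_mul_cos_add_mul_sin a b L t
  have hc' (t : ℝ) : HasDerivAt c' (-L ^ 2 * c t) t :=
    (hasDerivAt_mul_cos_add_mul_sin (L * b) (-(L * a)) L t).congr_deriv (by simp only [c]; ring)
  have hc'_sq (t : ℝ) : c' t ^ 2 = L ^ 2 * (a ^ 2 + b ^ 2) - L ^ 2 * c t ^ 2 := by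
    simp only [c, c']
    linear_combination L ^ 2 * (a ^ 2 + b ^ 2) * sin_sq_add_cos_sq (L * t)
  have hc_sq (t : ℝ) : c t ^ 2 < 1 := (mul_cos_add_mul_sin_sq_le a b (L * t)).trans_lt hab
  have hc_cont : Continuous c := by fun_prop
  clear_value c c'
  have hsqrt_pos (t : ℝ) : 0 < √(1 - c t ^ 2) := sqrt_pos.2 (by linarith [hc_sq t])
  have hsqrt (t : ℝ) :
      HasDerivAt (fun t => √(1 - c t ^ 2)) (-(c t * c' t) / √(1 - c t ^ 2)) t :=
    ((((hc t).fun_pow 2).const_sub 1).sqrt (by linarith [hc_sq t])).congr_deriv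
      (by field_simp; push_cast; ring)
  have harccos (t : ℝ) : HasDerivAt (arccos ∘ c) (-c' t / √(1 - c t ^ 2)) t :=
    ((hasDerivAt_arccos (by nlinarith [hc_sq t]) (by nlinarith [hc_sq t])).comp t
      (hc t)).congr_deriv (by ring)
  have harccos' (t : ℝ) : HasDerivAt (fun t => -c' t / √(1 - c t ^ 2))
      (L ^ 2 * c t * (1 - (a ^ 2 + b ^ 2)) / √(1 - c t ^ 2) ^ 3) t := by
    refine ((hc' t).neg.div (hsqrt t) (hsqrt_pos t).ne').congr_deriv ?_
    have hsq := sq_sqrt (by linarith [hc_sq t] : 0 ≤ 1 - c t ^ 2)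
    have hsqrt_ne := (hsqrt_pos t).ne'
    field_simp
    simp only [Pi.neg_apply]
    linear_combination L ^ 2 * c t * hsq - c t * hc'_sq t
  refine convexOn_of_hasDerivWithinAt2_nonneg hs ?_ (fun t _ => (harccos t).hasDerivWithinAt)
    (fun t _ => (harccos' t).hasDerivWithinAt) (fun t ht => ?_)
  · exact (continuous_arccos.comp hc_cont).continuousOn
  · have hct := hpos t (interior_subset ht)
    have hsqrt_t := hsqrt_pos t
    have hab' : 0 ≤ 1 - (a ^ 2 + b ^ 2) := by linarith
    positivity

theorem convexOn_arccos_mul_cos_add_mul_sin_of_le {s : Set ℝ} (hs : Convex ℝ s) {a b L : ℝ}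
    (hab : a ^ 2 + b ^ 2 ≤ 1) (hpos : ∀ t ∈ s, 0 < a * cos (L * t) + b * sin (L * t)) :
    ConvexOn ℝ s (fun t => arccos (a * cos (L * t) + b * sin (L * t))) := by
  refine ConvexOn.of_tendsto (l := 𝓝[<] (1 : ℝ))
    (F := fun μ t => arccos ((μ * a) * cos (L * t) + (μ * b) * sin (L * t))) hs ?_ fun t _ => ?_
  · filter_upwards [Ioo_mem_nhdsLT (zero_lt_one' ℝ)] with μ ⟨hμ0, hμ1⟩
    refine convexOn_arccos_mul_cos_add_mul_sin hs ?_ fun t ht => ?_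
    · nlinarith [mul_lt_one_of_nonneg_of_lt_one_left hμ0.le hμ1 hμ1.le]
    · have hμt := mul_pos hμ0 (hpos t ht)
      linarith
  · have hcont :
        Continuous fun μ : ℝ => arccos ((μ * a) * cos (L * t) + (μ * b) * sin (L * t)) :=
      continuous_arccos.comp (by fun_prop)
    simpa only [one_mul] using (hcont.tendsto 1).mono_left nhdsWithin_le_nhds

/-- Along a constant-speed minimizing geodesic `σ` on the unit sphere staying
within distance `< π/2` of `P`, the function
`t ↦ d(σ(t),P)² + 2·cos(d(σ(t),P))` is convex on `[0,1]`. -/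
theorem statement7 (σ : ℝ → EuclideanSpace ℝ (Fin 3))
    (P : EuclideanSpace ℝ (Fin 3)) (L : ℝ) (hL : L < Real.pi)
    (hσ : ∀ t ∈ Set.Icc (0:ℝ) 1, ‖σ t‖ = 1) (hP : ‖P‖ = 1)
    (hgeo : ∀ s ∈ Set.Icc (0:ℝ) 1, ∀ t ∈ Set.Icc (0:ℝ) 1,
      sphereDist (σ s) (σ t) = |s - t| * L)
    (hclose : ∀ t ∈ Set.Icc (0:ℝ) 1, sphereDist (σ t) P < Real.pi / 2) :
    ConvexOn ℝ (Set.Icc (0:ℝ) 1)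
      (fun t => sphereDist (σ t) P ^ 2 + 2 * Real.cos (sphereDist (σ t) P)) := by
  obtain ⟨a, b, hab, hσP⟩ := exists_inner_eq_mul_cos_add_mul_sin hL hσ
    (fun s hs t ht => sphereDist_eq_angle (hσ s hs) (hσ t ht) ▸ hgeo s hs t ht) P
  rw [hP, one_pow] at hab
  have hdist : ConvexOn ℝ (Icc 0 1) fun t => sphereDist (σ t) P := by
    refine (convexOn_arccos_mul_cos_add_mul_sin_of_le (L := L) (convex_Icc 0 1) hab
      fun t ht => ?_).congr fun t ht => by simp only [sphereDist, hσP t ht]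
    rw [← hσP t ht]
    exact arccos_lt_pi_div_two.1 (hclose t ht)
  exact (convexOn_sq_add_two_mul_cos.subset (subset_univ _) (convex_Ici 0)).comp_of_mapsTo
    monotoneOn_sq_add_two_mul_cos hdist fun t _ => arccos_nonneg _
end

section
/- Let Ω ⊂ ℝⁿ be a bounded open set, (Y,d) a CAT(1) space, P ∈ Y and 0 < τ < π/4, and let f : Ω → Y be a Lebesgue-measurable map with separable range such that d(f(x),P) < τ for a.e. x (so ∫_Ω d²(f(x),P) dx < ∞). For every ε > 0, setting Ω_ε = {x ∈ Ω : dist(x, ∂Ω) > ε}, there exists a Lipschitz continuous map h_ε : Ω_ε → Y such that ∫_{Ω_ε} d²(f(x), h_ε(x)) dx < ε. -/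
open scoped RealInnerProductSpace

open MeasureTheory

/-!
Approximate `f` in `L²` by a simple function `s` with values in the closed ball `B̄(P, τ)`, and
shrink each of the finitely many level sets of `s` to a compact subset, losing little measure.
The compact pieces lie at positive distance from each other, so Lipschitz bumps around them have
disjoint supports. Moving from `P` towards each value of `s` along the geodesic issuing from `P`,
at the height of the corresponding bump, gives a Lipschitz map that agrees with `s` on the pieces.
Off the pieces both maps stay in `B̄(P, τ)`, so the pointwise error there is at most `(2τ)²`.
-/

section Approximation

open Metric Set Filter Topology Function
open scoped NNReal ENNReal

variable {α Y : Type*}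

section GlueSupports

variable {ι : Type*} {P : Y} {g : ι → α → Y}

open Classical in
/-- Meant for maps `g i` whose supports `{x | g i x ≠ P}` are pairwise disjoint: the result is
`g i` on the support of `g i`, and `P` off all supports. -/
noncomputable def glueSupports (P : Y) (g : ι → α → Y) (x : α) : Y :=
  if h : ∃ i, g i x ≠ P then g h.choose x else P

theorem glueSupports_eq_of_forall_ne {x : α} {i : ι} (hx : ∀ j ≠ i, g j x = P) :
    glueSupports P g x = g i x := by
  unfold glueSupports
  split_ifs with h
  · by_cases hi : h.choose = i
    · rw [hi]
    · exact (h.choose_spec (hx _ hi)).elim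
  · push Not at h
    exact (h i).symm

theorem dist_glueSupports_le [PseudoMetricSpace Y] {r : ℝ} (hr : 0 ≤ r)
    (hg : ∀ i x, dist (g i x) P ≤ r) (x : α) : dist (glueSupports P g x) P ≤ r := by
  unfold glueSupports
  split_ifs
  exacts [hg _ x, (dist_self P).trans_le hr]

theorem lipschitzWith_glueSupports [PseudoMetricSpace α] [PseudoMetricSpace Y] {K : ℝ≥0}
    (hg : ∀ i, LipschitzWith K (g i)) (hdisj : ∀ x i j, g i x ≠ P → g j x ≠ P → i = j) :
    LipschitzWith (2 * K) (glueSupports P g) := by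
  rcases isEmpty_or_nonempty ι with hι | hι
  · have hP : glueSupports P g = fun _ => P :=
      funext fun x => dif_neg fun ⟨i, _⟩ => hι.elim i
    rw [hP]
    exact LipschitzWith.const' P
  have hsupp : ∀ x, ∃ i, ∀ j ≠ i, g j x = P := by
    intro x
    by_cases h : ∃ i, g i x ≠ P
    · obtain ⟨i, hi⟩ := h
      exact ⟨i, fun j hj => by_contra fun hjP => hj (hdisj x j i hjP hi)⟩
    · push Not at h
      exact ⟨Classical.arbitrary ι, fun j _ => h j⟩
  refine LipschitzWith.of_dist_le_mul fun x z => ?_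
  obtain ⟨i, hi⟩ := hsupp x
  obtain ⟨j, hj⟩ := hsupp z
  rw [glueSupports_eq_of_forall_ne hi, glueSupports_eq_of_forall_ne hj]
  have hxz : ∀ k, dist (g k x) (g k z) ≤ K * dist x z := fun k => (hg k).dist_le_mul x z
  push_cast
  by_cases hij : i = j
  · subst hij
    nlinarith [hxz i, dist_nonneg (x := x) (y := z), K.coe_nonneg]
  · calc dist (g i x) (g j z) ≤ dist (g i x) P + dist P (g j z) := dist_triangle _ _ _
      _ = dist (g i x) (g i z) + dist (g j x) (g j z) := by
          rw [hj i hij, hi j (Ne.symm hij), dist_comm P]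
      _ ≤ 2 * K * dist x z := by linarith [hxz i, hxz j]

end GlueSupports

theorem exists_pos_pairwise_disjoint_thickening [MetricSpace α] {ι : Type*} [Finite ι]
    {C : ι → Set α} (hC : ∀ i, IsCompact (C i)) (hCd : Pairwise (Disjoint on C)) :
    ∃ δ > 0, Pairwise (Disjoint on fun i => thickening δ (C i)) := by
  have hpair : ∀ p : ι × ι, ∀ᶠ δ in 𝓝[>] (0 : ℝ),
      p.1 ≠ p.2 → Disjoint (thickening δ (C p.1)) (thickening δ (C p.2)) := by
    rintro ⟨i, j⟩
    by_cases hij : i = j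
    · exact Eventually.of_forall fun _ h => (h hij).elim
    obtain ⟨δ, hδ, hd⟩ := (hCd hij).exists_thickenings (hC i) (hC j).isClosed
    filter_upwards [Ioo_mem_nhdsGT hδ] with δ' hδ' _
    exact hd.mono (thickening_mono hδ'.2.le _) (thickening_mono hδ'.2.le _)
  obtain ⟨δ, hδ, hδ0⟩ := ((eventually_all.2 hpair).and self_mem_nhdsWithin).exists
  exact ⟨δ, hδ0, fun i j hij => hδ (i, j) hij⟩

theorem sq_dist_le_of_dist_le [PseudoMetricSpace Y] {a b P : Y} {τ : ℝ} (ha : dist a P ≤ τ)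
    (hb : dist b P ≤ τ) : dist a b ^ 2 ≤ (2 * τ) ^ 2 :=
  pow_le_pow_left₀ dist_nonneg (by linarith [dist_triangle_right a b P]) 2

namespace CAT1Space

variable [MetricSpace Y] [CompleteSpace Y]

theorem dist_interp_left (H : CAT1Space Y) {P Q : Y} (hPQ : dist P Q < Real.pi) {t : ℝ}
    (ht : t ∈ Icc (0 : ℝ) 1) : dist (H.interp P Q t) P = t * dist P Q := by
  have h := H.interp_dist P Q hPQ t 0 ht ⟨le_rfl, zero_le_one⟩
  rwa [H.interp_zero P Q hPQ, sub_zero, abs_of_nonneg ht.1] at h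

theorem lipschitzWith_interp_comp [PseudoMetricSpace α] (H : CAT1Space Y) {P Q : Y}
    (hPQ : dist P Q < Real.pi) {φ : α → ℝ} {K : ℝ≥0} (hφ : LipschitzWith K φ)
    (hφ01 : ∀ x, φ x ∈ Icc (0 : ℝ) 1) :
    LipschitzWith (K * nndist P Q) fun x => H.interp P Q (φ x) := by
  refine LipschitzWith.of_dist_le_mul fun x z => ?_
  rw [H.interp_dist P Q hPQ _ _ (hφ01 x) (hφ01 z), ← Real.dist_eq, NNReal.coe_mul,
    coe_nndist, mul_right_comm]
  exact mul_le_mul_of_nonneg_right (hφ.dist_le_mul x z) dist_nonneg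

theorem exists_lipschitzWith_eqOn_of_pairwise_disjoint [MetricSpace α] (H : CAT1Space Y)
    {ι : Type*} [Finite ι] {C : ι → Set α} (hC : ∀ i, IsCompact (C i))
    (hCd : Pairwise (Disjoint on C)) {P : Y} {τ : ℝ} (hτ0 : 0 ≤ τ) (hτ : τ < Real.pi)
    (y : ι → Y) (hy : ∀ i, dist P (y i) ≤ τ) :
    ∃ (h : α → Y) (K : ℝ≥0), LipschitzWith K h ∧ (∀ x, dist (h x) P ≤ τ) ∧
      ∀ i, EqOn h (fun _ => y i) (C i) := by
  obtain ⟨δ, hδ, hsep⟩ := exists_pos_pairwise_disjoint_thickening hC hCd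
  set φ : ι → α → ℝ := fun i x => thickenedIndicator hδ (C i) x
  have hφ01 : ∀ i x, φ i x ∈ Icc (0 : ℝ) 1 :=
    fun i x => ⟨NNReal.coe_nonneg _, by exact_mod_cast thickenedIndicator_le_one hδ _ x⟩
  have hφ : ∀ i, LipschitzWith δ.toNNReal⁻¹ (φ i) := fun i => by
    have h := NNReal.isometry_coe.lipschitz.comp (lipschitzWith_thickenedIndicator hδ (C i))
    rwa [one_mul] at h
  have hPy : ∀ i, dist P (y i) < Real.pi := fun i => (hy i).trans_lt hτ
  set g : ι → α → Y := fun i x => H.interp P (y i) (φ i x)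
  have hg_supp : ∀ i x, g i x ≠ P → x ∈ thickening δ (C i) := by
    intro i x hx
    by_contra hout
    apply hx
    simp only [g, φ]
    rw [thickenedIndicator_zero hδ _ hout, NNReal.coe_zero, H.interp_zero _ _ (hPy i)]
  refine ⟨glueSupports P g, 2 * (δ.toNNReal⁻¹ * τ.toNNReal), ?_, ?_, ?_⟩
  · refine lipschitzWith_glueSupports
      (fun i => (H.lipschitzWith_interp_comp (hPy i) (hφ i) (hφ01 i)).weaken ?_)
      fun x i j hi hj => by_contra fun hij =>
        Set.disjoint_left.1 (hsep hij) (hg_supp i x hi) (hg_supp j x hj)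
    gcongr
    rw [← NNReal.coe_le_coe, coe_nndist, Real.coe_toNNReal τ hτ0]
    exact hy i
  · refine dist_glueSupports_le hτ0 fun i x => ?_
    rw [H.dist_interp_left (hPy i) (hφ01 i x)]
    simpa using mul_le_mul (hφ01 i x).2 (hy i) dist_nonneg zero_le_one
  · intro i x hx
    have hout : ∀ j ≠ i, g j x = P := fun j hj => by_contra fun h =>
      Set.disjoint_left.1 (hsep hj) (hg_supp j x h) (self_subset_thickening hδ _ hx)
    rw [glueSupports_eq_of_forall_ne hout]
    simp only [g, φ]
    rw [thickenedIndicator_one hδ _ hx, NNReal.coe_one, H.interp_one _ _ (hPy i)]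

theorem exists_lipschitzWith_eq_simpleFunc [MetricSpace α] [MeasurableSpace α]
    [OpensMeasurableSpace α] {μ : Measure α} [IsFiniteMeasure μ] [μ.InnerRegularCompactLTTop]
    (H : CAT1Space Y) (s : SimpleFunc α Y) {P : Y} {τ : ℝ} (hτ0 : 0 ≤ τ) (hτ : τ < Real.pi)
    (hsP : ∀ x, dist (s x) P ≤ τ) {η : ℝ≥0∞} (hη : η ≠ 0) :
    ∃ (h : α → Y) (K : ℝ≥0) (E : Set α), LipschitzWith K h ∧ (∀ x, dist (h x) P ≤ τ) ∧
      MeasurableSet E ∧ μ E ≤ η ∧ ∀ x ∉ E, h x = s x := by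
  have hcomp : ∀ y : s.range, ∃ K ⊆ s ⁻¹' {(y : Y)}, IsCompact K ∧
      μ (s ⁻¹' {(y : Y)} \ K) < η / Fintype.card s.range := fun y =>
    (s.measurableSet_fiber y).exists_isCompact_sdiff_lt (measure_ne_top _ _)
      (ENNReal.div_ne_zero.2 ⟨hη, ENNReal.natCast_ne_top _⟩)
  choose C hCs hCc hCμ using hcomp
  have hCd : Pairwise (Disjoint on C) := fun y y' hne =>
    (Set.disjoint_singleton.2 (Subtype.coe_injective.ne hne)).preimage s |>.mono (hCs y) (hCs y')
  have hy : ∀ y : s.range, dist P y ≤ τ := fun y => by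
    obtain ⟨x, hx⟩ := SimpleFunc.mem_range.1 y.2
    rw [← hx, dist_comm]
    exact hsP x
  obtain ⟨h, K, hK, hhP, hhC⟩ :=
    H.exists_lipschitzWith_eqOn_of_pairwise_disjoint hCc hCd hτ0 hτ (fun y => y) hy
  refine ⟨h, K, (⋃ y, C y)ᶜ, hK, hhP,
    (MeasurableSet.iUnion fun y => (hCc y).isClosed.measurableSet).compl, ?_, ?_⟩
  · have hcover : (⋃ y, C y)ᶜ ⊆ ⋃ y : s.range, s ⁻¹' {(y : Y)} \ C y := fun x hx =>
      mem_iUnion.2 ⟨⟨s x, s.mem_range_self x⟩, rfl, fun hxC => hx (mem_iUnion.2 ⟨_, hxC⟩)⟩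
    calc μ (⋃ y, C y)ᶜ ≤ ∑ y : s.range, μ (s ⁻¹' {(y : Y)} \ C y) :=
          (measure_mono hcover).trans (measure_iUnion_fintype_le _ _)
      _ ≤ ∑ _y : s.range, η / Fintype.card s.range :=
          Finset.sum_le_sum fun y _ => (hCμ y).le
      _ ≤ η := by
          rw [Finset.sum_const, Finset.card_univ, nsmul_eq_mul]
          exact ENNReal.mul_div_le
  · intro x hx
    obtain ⟨y, hxy⟩ := mem_iUnion.1 (notMem_compl_iff.1 hx)
    rw [hhC y hxy]
    exact (hCs y hxy).symm

end CAT1Space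

theorem exists_simpleFunc_integral_dist_sq_lt [MetricSpace Y] [MeasurableSpace α]
    {μ : Measure α} [IsFiniteMeasure μ] {f : α → Y} (hf : AEStronglyMeasurable f μ) {P : Y}
    {τ : ℝ} (hτ0 : 0 ≤ τ) (hfP : ∀ᵐ x ∂μ, dist (f x) P ≤ τ) {ε : ℝ} (hε : 0 < ε) :
    ∃ s : SimpleFunc α Y, (∀ x, dist (s x) P ≤ τ) ∧ ∫ x, dist (f x) (s x) ^ 2 ∂μ < ε := by
  borelize Y
  set g := hf.mk f
  have hg : Measurable g := hf.stronglyMeasurable_mk.measurable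
  set T := {P} ∪ (range g ∩ closedBall P τ)
  have : TopologicalSpace.SeparableSpace T := ((finite_singleton P).isSeparable.union
    (hf.stronglyMeasurable_mk.isSeparable_range.mono inter_subset_left)).separableSpace
  have hTP : ∀ y ∈ T, dist y P ≤ τ := by
    rintro y (rfl | ⟨-, hy⟩)
    exacts [(dist_self y).trans_le hτ0, hy]
  have hPT : P ∈ T := mem_union_left _ rfl
  set s : ℕ → SimpleFunc α Y := SimpleFunc.approxOn g hg T P hPT
  have hsP : ∀ k x, dist (s k x) P ≤ τ := fun k x => hTP _ (SimpleFunc.approxOn_mem _ _ k x)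
  have hlim : Tendsto (fun k => ∫ x, dist (f x) (s k x) ^ 2 ∂μ) atTop (𝓝 0) := by
    have hconv : ∀ᵐ x ∂μ, Tendsto (fun k => dist (f x) (s k x) ^ 2) atTop (𝓝 0) := by
      filter_upwards [hf.ae_eq_mk, hfP] with x hfg hx
      have hgT : g x ∈ closure T := subset_closure
        (Or.inr ⟨mem_range_self x, mem_closedBall.2 ((congrArg (dist · P) hfg).ge.trans hx)⟩)
      have h := (tendsto_const_nhds (x := g x)).dist (SimpleFunc.tendsto_approxOn hg hPT hgT)
      simpa [hfg] using h.pow 2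
    simpa using tendsto_integral_of_dominated_convergence (fun _ => (2 * τ) ^ 2)
      (fun k => (hf.dist (s k).aestronglyMeasurable).pow 2) (integrable_const _)
      (fun k => hfP.mono fun x hx => by
        rw [Real.norm_eq_abs, abs_of_nonneg (sq_nonneg _)]
        exact sq_dist_le_of_dist_le hx (hsP k x))
      hconv
  obtain ⟨k, hk⟩ := (hlim.eventually (gt_mem_nhds hε)).exists
  exact ⟨s k, hsP k, hk⟩

theorem integral_dist_sq_le_add_of_eq_off [MetricSpace Y] [MeasurableSpace α] {μ : Measure α}
    [IsFiniteMeasure μ] {f h : α → Y} {s : SimpleFunc α Y} (hf : AEStronglyMeasurable f μ)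
    {P : Y} {τ : ℝ} (hfP : ∀ᵐ x ∂μ, dist (f x) P ≤ τ) (hsP : ∀ x, dist (s x) P ≤ τ)
    (hhP : ∀ x, dist (h x) P ≤ τ) {E : Set α} (hE : MeasurableSet E)
    (hhs : ∀ x ∉ E, h x = s x) :
    ∫ x, dist (f x) (h x) ^ 2 ∂μ ≤ ∫ x, dist (f x) (s x) ^ 2 ∂μ + (2 * τ) ^ 2 * μ.real E := by
  have hfs : Integrable (fun x => dist (f x) (s x) ^ 2) μ :=
    (integrable_const ((2 * τ) ^ 2)).mono' ((hf.dist s.aestronglyMeasurable).pow 2)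
      (hfP.mono fun x hx => by
        rw [Real.norm_eq_abs, abs_of_nonneg (sq_nonneg _)]
        exact sq_dist_le_of_dist_le hx (hsP x))
  have hind : Integrable (E.indicator fun _ => (2 * τ) ^ 2) μ :=
    (integrable_const _).indicator hE
  calc ∫ x, dist (f x) (h x) ^ 2 ∂μ
      ≤ ∫ x, dist (f x) (s x) ^ 2 + E.indicator (fun _ => (2 * τ) ^ 2) x ∂μ := by
        refine integral_mono_of_nonneg (ae_of_all _ fun x => sq_nonneg _) (hfs.add hind) ?_
        filter_upwards [hfP] with x hx
        by_cases hxE : x ∈ E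
        · rw [indicator_of_mem hxE]
          linarith [sq_dist_le_of_dist_le hx (hhP x), sq_nonneg (dist (f x) (s x))]
        · rw [indicator_of_notMem hxE, hhs x hxE, add_zero]
    _ = ∫ x, dist (f x) (s x) ^ 2 ∂μ + (2 * τ) ^ 2 * μ.real E := by
        rw [integral_add hfs hind, integral_indicator_const _ hE, smul_eq_mul, mul_comm]

end Approximation

theorem statement11_general (n : ℕ) (Ω : Set (EuclideanSpace ℝ (Fin n)))
    (hΩb : Bornology.IsBounded Ω)
    (Y : Type*) [MetricSpace Y] [CompleteSpace Y] (H : CAT1Space Y)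
    (P : Y) (τ : ℝ) (hτ0 : 0 < τ) (hτ : τ < Real.pi / 4)
    (f : EuclideanSpace ℝ (Fin n) → Y)
    (hf : AEStronglyMeasurable f (volume.restrict Ω))
    (hball : ∀ᵐ x ∂(volume.restrict Ω), dist (f x) P < τ)
    (ε : ℝ) (hε : 0 < ε) :
    ∃ (h : EuclideanSpace ℝ (Fin n) → Y) (K : NNReal),
      LipschitzOnWith K h {x ∈ Ω | ε < Metric.infDist x (frontier Ω)} ∧
      (∫ x in {x ∈ Ω | ε < Metric.infDist x (frontier Ω)},
          dist (f x) (h x) ^ 2) < ε := by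
  set S := {x ∈ Ω | ε < Metric.infDist x (frontier Ω)}
  have hSΩ : S ⊆ Ω := Set.sep_subset _ _
  have : IsFiniteMeasure (volume.restrict S) :=
    isFiniteMeasure_restrict.2 (hΩb.subset hSΩ).measure_lt_top.ne
  have hfS : AEStronglyMeasurable f (volume.restrict S) :=
    hf.mono_measure (Measure.restrict_mono hSΩ le_rfl)
  have hfP : ∀ᵐ x ∂volume.restrict S, dist (f x) P ≤ τ :=
    (ae_restrict_of_ae_restrict_of_subset hSΩ hball).mono fun _ => le_of_lt
  obtain ⟨s, hsP, hs⟩ := exists_simpleFunc_integral_dist_sq_lt hfS hτ0.le hfP (half_pos hε)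
  set η := ε / 2 / (2 * τ) ^ 2
  have hη : 0 < η := by positivity
  obtain ⟨h, K, E, hK, hhP, hE, hEη, hhs⟩ :=
    H.exists_lipschitzWith_eq_simpleFunc (μ := volume.restrict S) s hτ0.le
      (by linarith [Real.pi_pos]) hsP (ENNReal.ofReal_pos.2 hη).ne'
  refine ⟨h, K, hK.lipschitzOnWith, ?_⟩
  calc ∫ x in S, dist (f x) (h x) ^ 2
      ≤ (∫ x in S, dist (f x) (s x) ^ 2) + (2 * τ) ^ 2 * (volume.restrict S).real E :=
        integral_dist_sq_le_add_of_eq_off hfS hfP hsP hhP hE hhs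
    _ < ε / 2 + (2 * τ) ^ 2 * η :=
        add_lt_add_of_lt_of_le hs
          (mul_le_mul_of_nonneg_left (ENNReal.toReal_le_of_le_ofReal hη.le hEη) (sq_nonneg _))
    _ = ε := by
        simp only [η]
        field_simp
        ring

/-- `L²` approximation of a map into a small ball of a CAT(1) space by
Lipschitz maps on the subdomain at distance `> ε` from the boundary. -/
theorem statement11 (n : ℕ) (Ω : Set (EuclideanSpace ℝ (Fin n)))
    (hΩo : IsOpen Ω) (hΩb : Bornology.IsBounded Ω)
    (Y : Type*) [MetricSpace Y] [CompleteSpace Y] (H : CAT1Space Y)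
    (P : Y) (τ : ℝ) (hτ0 : 0 < τ) (hτ : τ < Real.pi / 4)
    (f : EuclideanSpace ℝ (Fin n) → Y)
    (hf : AEStronglyMeasurable f (volume.restrict Ω))
    (hball : ∀ᵐ x ∂(volume.restrict Ω), dist (f x) P < τ)
    (ε : ℝ) (hε : 0 < ε) :
    ∃ (h : EuclideanSpace ℝ (Fin n) → Y) (K : NNReal),
      LipschitzOnWith K h {x ∈ Ω | ε < Metric.infDist x (frontier Ω)} ∧
      (∫ x in {x ∈ Ω | ε < Metric.infDist x (frontier Ω)},
          dist (f x) (h x) ^ 2) < ε :=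
  statement11_general n Ω hΩb Y H P τ hτ0 hτ f hf hball ε hε
end
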